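/- arXiv:2203.12959 — 3 statements merged into one kernel-verified Lean document; each statement's English description precedes it below -/
import Mathlib

section
/- Let Π ∈ Π_{q,r}. Then the set Z_r⁰(Π) is nonempty if and only if rank Π₂₂ ≥ rank (Π|Π₂₂). -/
/-!
Completing the square: since `ker Π₂₂ ⊆ ker Π₁₂` gives `Π₁₂ Π₂₂^† Π₂₂ = Π₁₂`,
`[I; Z]ᵀ Π [I; Z] = Π|Π₂₂ + Wᵀ Π₂₂ W` with `W = Z + Π₂₂^† Π₂₁`. Hence `Z_r⁰(Π)` is nonempty iff
`Π|Π₂₂ = Wᵀ (-Π₂₂) W` for some `W`. Such a factorization bounds the rank of `Π|Π₂₂` by that of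
`Π₂₂`. Conversely, diagonalizing the positive semidefinite matrices `-Π₂₂` and `Π|Π₂₂`
orthogonally reduces to diagonal matrices; there `W` maps the eigenvectors of `Π|Π₂₂` with
nonzero eigenvalue, rescaled, to distinct eigenvectors of `-Π₂₂` with nonzero eigenvalue, which
the rank inequality makes possible.
-/

open Matrix
open scoped Classical

/-- The Moore–Penrose pseudoinverse of a real matrix, defined via its four
characterizing Penrose conditions (which determine it uniquely). -/
noncomputable def pinv {m n : ℕ} (A : Matrix (Fin m) (Fin n) ℝ) : Matrix (Fin n) (Fin m) ℝ :=
  if h : ∃ B : Matrix (Fin n) (Fin m) ℝ,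
      A * B * A = A ∧ B * A * B = B ∧ (A * B)ᵀ = A * B ∧ (B * A)ᵀ = B * A
  then h.choose else 0

/-- The unique positive semidefinite square root of a positive semidefinite matrix
(defined by its characterizing property, which determines it uniquely). -/
noncomputable def msqrt {n : ℕ} (A : Matrix (Fin n) (Fin n) ℝ) : Matrix (Fin n) (Fin n) ℝ :=
  if h : ∃ B : Matrix (Fin n) (Fin n) ℝ, B.PosSemidef ∧ B * B = A then h.choose else 0

/-- The quadratic matrix expression `[I; Z]ᵀ Π [I; Z]`. -/
noncomputable def qmi {q r : ℕ} (P : Matrix (Fin q ⊕ Fin r) (Fin q ⊕ Fin r) ℝ)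
    (Z : Matrix (Fin r) (Fin q) ℝ) : Matrix (Fin q) (Fin q) ℝ :=
  (fromRows (1 : Matrix (Fin q) (Fin q) ℝ) Z)ᵀ * P * fromRows 1 Z

/-- The solution set `Z_r(Π)` of the nonstrict QMI. -/
def ZrSet {q r : ℕ} (P : Matrix (Fin q ⊕ Fin r) (Fin q ⊕ Fin r) ℝ) :
    Set (Matrix (Fin r) (Fin q) ℝ) := {Z | (qmi P Z).PosSemidef}

/-- The solution set `Z_r⁺(Π)` of the strict QMI. -/
def ZrPlusSet {q r : ℕ} (P : Matrix (Fin q ⊕ Fin r) (Fin q ⊕ Fin r) ℝ) :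
    Set (Matrix (Fin r) (Fin q) ℝ) := {Z | (qmi P Z).PosDef}

/-- The solution set `Z_r⁰(Π)` of the quadratic matrix equality. -/
def ZrZeroSet {q r : ℕ} (P : Matrix (Fin q ⊕ Fin r) (Fin q ⊕ Fin r) ℝ) :
    Set (Matrix (Fin r) (Fin q) ℝ) := {Z | qmi P Z = 0}

/-- Generalized Schur complement `Π|Π₂₂ = Π₁₁ − Π₁₂ Π₂₂^† Π₂₁`. -/
noncomputable def schurC {q r : ℕ} (P : Matrix (Fin q ⊕ Fin r) (Fin q ⊕ Fin r) ℝ) :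
    Matrix (Fin q) (Fin q) ℝ :=
  P.toBlocks₁₁ - P.toBlocks₁₂ * pinv P.toBlocks₂₂ * P.toBlocks₂₁

/-- Membership in the class `Π_{q,r}`: symmetric, `Π₂₂ ⪯ 0`, `Π|Π₂₂ ⪰ 0`,
and `ker Π₂₂ ⊆ ker Π₁₂`. -/
def memPi {q r : ℕ} (P : Matrix (Fin q ⊕ Fin r) (Fin q ⊕ Fin r) ℝ) : Prop :=
  P.IsSymm ∧ (-P.toBlocks₂₂).PosSemidef ∧ (schurC P).PosSemidef ∧
    ∀ x : Fin r → ℝ, P.toBlocks₂₂ *ᵥ x = 0 → P.toBlocks₁₂ *ᵥ x = 0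

def IsPenrose {m n : Type*} [Fintype m] [Fintype n] (A : Matrix m n ℝ) (B : Matrix n m ℝ) :
    Prop :=
  A * B * A = A ∧ B * A * B = B ∧ (A * B)ᵀ = A * B ∧ (B * A)ᵀ = B * A

namespace IsPenrose

section Rectangular

variable {m n : Type*} [Fintype m] [Fintype n] {A : Matrix m n ℝ} {B C : Matrix n m ℝ}

theorem unique (hB : IsPenrose A B) (hC : IsPenrose A C) : B = C := by
  obtain ⟨hB₁, hB₂, hB₃, hB₄⟩ := hB
  obtain ⟨hC₁, hC₂, hC₃, hC₄⟩ := hC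
  have hAB : A * B = A * C :=
    calc A * B = (A * C * A) * B := by rw [hC₁]
    _ = ((A * B) * (A * C))ᵀ := by rw [transpose_mul, hC₃, hB₃]; simp only [Matrix.mul_assoc]
    _ = A * C := by rw [← Matrix.mul_assoc, hB₁, hC₃]
  have hBA : B * A = C * A :=
    calc B * A = B * (A * C * A) := by rw [hC₁]
    _ = ((C * A) * (B * A))ᵀ := by rw [transpose_mul, hC₄, hB₄]; simp only [Matrix.mul_assoc]
    _ = C * A := by rw [Matrix.mul_assoc, ← Matrix.mul_assoc A, hB₁, hC₄]
  calc B = B * A * B := hB₂.symm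
  _ = C * A * C := by rw [hBA, Matrix.mul_assoc, hAB, ← Matrix.mul_assoc]
  _ = C := hC₂

theorem transpose (h : IsPenrose A B) : IsPenrose Aᵀ Bᵀ := by
  obtain ⟨h₁, h₂, h₃, h₄⟩ := h
  refine ⟨?_, ?_, ?_, ?_⟩
  · rw [← transpose_mul, ← transpose_mul, ← Matrix.mul_assoc, h₁]
  · rw [← transpose_mul, ← transpose_mul, ← Matrix.mul_assoc, h₂]
  · rw [← transpose_mul, h₄, h₄]
  · rw [← transpose_mul, h₃, h₃]

end Rectangular

theorem conj {n k : Type*} [Fintype n] [DecidableEq n] [Fintype k] {A B : Matrix n n ℝ}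
    {U : Matrix k n ℝ} (hU : Uᵀ * U = 1) (h : IsPenrose A B) : IsPenrose (U * A * Uᵀ) (U * B * Uᵀ) := by
  have hmul (X Y : Matrix n n ℝ) : U * X * Uᵀ * (U * Y * Uᵀ) = U * (X * Y) * Uᵀ := by
    simp only [Matrix.mul_assoc, ← Matrix.mul_assoc Uᵀ U, hU, Matrix.one_mul]
  have htr (X : Matrix n n ℝ) : (U * X * Uᵀ)ᵀ = U * Xᵀ * Uᵀ := by
    simp only [transpose_mul, transpose_transpose, Matrix.mul_assoc]
  obtain ⟨h₁, h₂, h₃, h₄⟩ := h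
  exact ⟨by rw [hmul, hmul, h₁], by rw [hmul, hmul, h₂], by rw [hmul, htr, h₃],
    by rw [hmul, htr, h₄]⟩

theorem diagonal {n : Type*} [Fintype n] [DecidableEq n] (d : n → ℝ) :
    IsPenrose (diagonal d) (diagonal d⁻¹) := by
  simp only [IsPenrose, diagonal_mul_diagonal, diagonal_transpose]
  refine ⟨?_, ?_, trivial, trivial⟩ <;> congr 1 <;> funext i
  · exact mul_inv_mul_cancel (d i)
  · simpa using mul_inv_mul_cancel (d i)⁻¹

end IsPenrose

theorem pinv_eq_of_isPenrose {m n : ℕ} {A : Matrix (Fin m) (Fin n) ℝ}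
    {B : Matrix (Fin n) (Fin m) ℝ} (h : IsPenrose A B) : pinv A = B := by
  have hex : ∃ B : Matrix (Fin n) (Fin m) ℝ,
      A * B * A = A ∧ B * A * B = B ∧ (A * B)ᵀ = A * B ∧ (B * A)ᵀ = B * A := ⟨B, h⟩
  rw [pinv, dif_pos hex]
  exact IsPenrose.unique hex.choose_spec h

theorem Matrix.IsHermitian.exists_eq_mul_diagonal_mul_transpose {n : Type*} [Fintype n]
    [DecidableEq n] {A : Matrix n n ℝ} (hA : A.IsHermitian) :
    ∃ U : Matrix n n ℝ, Uᵀ * U = 1 ∧ A = U * diagonal hA.eigenvalues * Uᵀ := by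
  refine ⟨hA.eigenvectorUnitary, ?_, ?_⟩
  · simpa [star_eq_conjTranspose] using Unitary.coe_star_mul_self hA.eigenvectorUnitary
  · simpa [Unitary.conjStarAlgAut_apply, RCLike.ofReal_real_eq_id, star_eq_conjTranspose]
      using hA.spectral_theorem

theorem isPenrose_pinv {n : ℕ} {A : Matrix (Fin n) (Fin n) ℝ} (hA : A.IsSymm) :
    IsPenrose A (pinv A) := by
  obtain ⟨U, hU, hAU⟩ := (isHermitian_iff_isSymm.mpr hA).exists_eq_mul_diagonal_mul_transpose
  rw [hAU, pinv_eq_of_isPenrose ((IsPenrose.diagonal _).conj hU)]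
  exact (IsPenrose.diagonal _).conj hU

theorem transpose_pinv {n : ℕ} {A : Matrix (Fin n) (Fin n) ℝ} (hA : A.IsSymm) :
    (pinv A)ᵀ = pinv A := by
  have h := isPenrose_pinv hA
  exact (hA.eq ▸ h.transpose).unique h

theorem mul_mul_eq_of_ker_le {m n k : Type*} [Fintype m] [Fintype n] {A : Matrix m n ℝ}
    {B : Matrix n m ℝ} {C : Matrix k n ℝ} (hA : A * B * A = A)
    (hker : ∀ x, A *ᵥ x = 0 → C *ᵥ x = 0) : C * (B * A) = C := by
  refine ext_iff_mulVec.mpr fun x => ?_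
  have h : A *ᵥ ((B * A) *ᵥ x - x) = 0 := by
    rw [mulVec_sub, mulVec_mulVec, ← Matrix.mul_assoc, hA, sub_self]
  rw [← mulVec_mulVec, ← sub_eq_zero, ← mulVec_sub]
  exact hker _ h

section QMI

variable {q r : ℕ} {P : Matrix (Fin q ⊕ Fin r) (Fin q ⊕ Fin r) ℝ}

theorem qmi_eq_blocks (Z : Matrix (Fin r) (Fin q) ℝ) :
    qmi P Z = P.toBlocks₁₁ + P.toBlocks₁₂ * Z + Zᵀ * P.toBlocks₂₁ + Zᵀ * P.toBlocks₂₂ * Z := by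
  conv_lhs => rw [qmi, ← fromBlocks_toBlocks P]
  -- `qmi` elaborates one of its products through the `CStarMatrix` instance, hence `erw`
  erw [Matrix.mul_assoc, fromBlocks_mul_fromRows, transpose_fromRows, transpose_one,
    fromCols_mul_fromRows]
  simp only [Matrix.mul_one, Matrix.one_mul, Matrix.mul_add, Matrix.mul_assoc]
  abel

theorem qmi_eq_schurC_add (hs : P.IsSymm)
    (hker : ∀ x : Fin r → ℝ, P.toBlocks₂₂ *ᵥ x = 0 → P.toBlocks₁₂ *ᵥ x = 0)
    (Z : Matrix (Fin r) (Fin q) ℝ) :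
    qmi P Z = schurC P + (Z + pinv P.toBlocks₂₂ * P.toBlocks₂₁)ᵀ * P.toBlocks₂₂ *
      (Z + pinv P.toBlocks₂₂ * P.toBlocks₂₁) := by
  obtain ⟨-, h₁₂, h₂₁, h₂₂⟩ := isSymm_fromBlocks_iff.mp (by rwa [fromBlocks_toBlocks])
  have h₁₂₂ : P.toBlocks₁₂ * (pinv P.toBlocks₂₂ * P.toBlocks₂₂) = P.toBlocks₁₂ :=
    mul_mul_eq_of_ker_le (isPenrose_pinv h₂₂).1 hker
  have h₂₂₁ : P.toBlocks₂₂ * (pinv P.toBlocks₂₂ * P.toBlocks₂₁) = P.toBlocks₂₁ := by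
    simpa [← h₁₂, transpose_pinv h₂₂, h₂₂.eq, Matrix.mul_assoc] using congrArg transpose h₁₂₂
  rw [qmi_eq_blocks, schurC]
  simp only [transpose_add, transpose_mul, transpose_pinv h₂₂, h₂₁,
    Matrix.mul_add, Matrix.add_mul, Matrix.mul_assoc, h₂₂₁, h₁₂₂]
  abel

end QMI

theorem Matrix.rank_neg {m n : Type*} [Fintype n] (M : Matrix m n ℝ) : (-M).rank = M.rank := by
  simpa using M.rank_smul_of_mem_nonZeroDivisors
    (mem_nonZeroDivisors_of_ne_zero (neg_ne_zero.mpr one_ne_zero))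

theorem exists_transpose_mul_diagonal_mul_eq_diagonal {m n : Type*} [Fintype m] [DecidableEq m]
    [Fintype n] [DecidableEq n] {μ : m → ℝ} {ν : n → ℝ} (hμ : 0 ≤ μ) (hν : 0 ≤ ν)
    (hcard : Fintype.card {j // ν j ≠ 0} ≤ Fintype.card {i // μ i ≠ 0}) :
    ∃ X : Matrix m n ℝ, Xᵀ * diagonal μ * X = diagonal ν := by
  obtain ⟨φ⟩ := Function.Embedding.nonempty_of_card_le hcard
  let col : n → m → ℝ := fun j =>
    if h : ν j ≠ 0 then Pi.single (φ ⟨j, h⟩ : m) √(ν j / μ (φ ⟨j, h⟩)) else 0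
  refine ⟨of fun i j => col j i, ?_⟩
  ext j k
  simp only [mul_apply, transpose_apply, of_apply, diagonal_apply]
  by_cases hj : ν j = 0
  · simp [col, hj]
  by_cases hk : ν k = 0
  · have hjk : j ≠ k := by rintro rfl; exact hj hk
    simp [col, hk, hjk]
  have hφ : ((φ ⟨k, hk⟩ : m) = φ ⟨j, hj⟩) ↔ j = k := by
    rw [Subtype.coe_inj, φ.injective.eq_iff, Subtype.mk.injEq, eq_comm]
  simp only [col, ne_eq, dite_not, hj, hk, ↓reduceDIte, Pi.single_apply, mul_ite, ite_mul,
    zero_mul, mul_zero, Finset.sum_ite_eq', Finset.mem_univ, ↓reduceIte, hφ]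
  split_ifs with hjk
  · subst hjk
    have hμj : μ (φ ⟨j, hj⟩) ≠ 0 := (φ ⟨j, hj⟩).2
    rw [mul_right_comm, Real.mul_self_sqrt (div_nonneg (hν j) (hμ _)), div_mul_cancel₀ _ hμj]
  · rfl

theorem exists_transpose_mul_mul_eq_iff_rank_le {m n : Type*} [Fintype m] [DecidableEq m]
    [Fintype n] [DecidableEq n] {N : Matrix m m ℝ} {S : Matrix n n ℝ} (hN : N.PosSemidef)
    (hS : S.PosSemidef) : (∃ X : Matrix m n ℝ, Xᵀ * N * X = S) ↔ S.rank ≤ N.rank := by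
  refine ⟨?_, fun hrank => ?_⟩
  · rintro ⟨X, rfl⟩
    exact (rank_mul_le_left _ _).trans (rank_mul_le_right _ _)
  rw [hN.1.rank_eq_card_non_zero_eigs, hS.1.rank_eq_card_non_zero_eigs] at hrank
  obtain ⟨Y, hY⟩ := exists_transpose_mul_diagonal_mul_eq_diagonal
    (fun i => hN.eigenvalues_nonneg i) (fun j => hS.eigenvalues_nonneg j) hrank
  obtain ⟨U, hU, hNU⟩ := hN.1.exists_eq_mul_diagonal_mul_transpose
  obtain ⟨V, -, hSV⟩ := hS.1.exists_eq_mul_diagonal_mul_transpose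
  refine ⟨U * Y * Vᵀ, ?_⟩
  rw [hNU, hSV, ← hY]
  simp only [transpose_mul, transpose_transpose, Matrix.mul_assoc, ← Matrix.mul_assoc Uᵀ U, hU,
    Matrix.one_mul]

section ZrZeroSet

variable {q r : ℕ} {P : Matrix (Fin q ⊕ Fin r) (Fin q ⊕ Fin r) ℝ}

theorem mem_zrZeroSet_iff (hs : P.IsSymm)
    (hker : ∀ x : Fin r → ℝ, P.toBlocks₂₂ *ᵥ x = 0 → P.toBlocks₁₂ *ᵥ x = 0)
    (Z : Matrix (Fin r) (Fin q) ℝ) :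
    Z ∈ ZrZeroSet P ↔ (Z + pinv P.toBlocks₂₂ * P.toBlocks₂₁)ᵀ * -P.toBlocks₂₂ *
      (Z + pinv P.toBlocks₂₂ * P.toBlocks₂₁) = schurC P := by
  rw [ZrZeroSet, Set.mem_ofPred_eq, qmi_eq_schurC_add hs hker, Matrix.mul_neg, Matrix.neg_mul,
    neg_eq_iff_add_eq_zero, add_comm]

theorem zrZeroSet_nonempty_iff (hs : P.IsSymm)
    (hker : ∀ x : Fin r → ℝ, P.toBlocks₂₂ *ᵥ x = 0 → P.toBlocks₁₂ *ᵥ x = 0) :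
    (ZrZeroSet P).Nonempty ↔
      ∃ W : Matrix (Fin r) (Fin q) ℝ, Wᵀ * -P.toBlocks₂₂ * W = schurC P := by
  constructor
  · rintro ⟨Z, hZ⟩
    exact ⟨_, (mem_zrZeroSet_iff hs hker Z).mp hZ⟩
  · rintro ⟨W, hW⟩
    refine ⟨W - pinv P.toBlocks₂₂ * P.toBlocks₂₁, (mem_zrZeroSet_iff hs hker _).mpr ?_⟩
    rwa [sub_add_cancel]

end ZrZeroSet

/-- For `Π ∈ Π_{q,r}`, the set `Z_r⁰(Π)` is nonempty
if and only if `rank Π₂₂ ≥ rank (Π|Π₂₂)`. -/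
theorem stmt_4 {q r : ℕ} (P : Matrix (Fin q ⊕ Fin r) (Fin q ⊕ Fin r) ℝ) (hP : memPi P) :
    (ZrZeroSet P).Nonempty ↔ (schurC P).rank ≤ P.toBlocks₂₂.rank := by
  obtain ⟨hs, hN, hS, hker⟩ := hP
  rw [zrZeroSet_nonempty_iff hs hker, exists_transpose_mul_mul_eq_iff_rank_le hN hS, rank_neg]
end

section
/- Let Π ∈ Π_{q,r} and W ∈ ℝ^{q×p}. Assume that W has full column rank and that Z_r⁺(Π) is nonempty. Then Z_r⁺(Π)·W = Z_r⁺(Π_W), where Z_r⁺(Π)·W := { ZW : Z ∈ Z_r⁺(Π) }. -/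
/-!
Completing the square with `K = Π₂₂^† Π₂₁`, which solves `Π₂₂ K = Π₂₁` because
`ker Π₂₂ ⊆ ker Π₁₂`, gives `[I; Z]ᵀ Π [I; Z] = S + (Z + K)ᵀ Π₂₂ (Z + K)` with
`S = Π₁₁ - Π₁₂ K`, and the same identity for `Π_W` with `S, K` replaced by `Wᵀ S W, K W`.
A solution of the strict QMI together with `Π₂₂ ⪯ 0` forces `S ≻ 0`, so it remains to show
`{Y | S + Yᵀ A Y ≻ 0} · W = {Y' | Wᵀ S W + Y'ᵀ A Y' ≻ 0}`. Inclusion is congruence by the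
injective `W`. Conversely, with `M = Wᵀ S W` and the left inverse `F = M⁻¹ Wᵀ S` of `W`,
`Y = Y' F` satisfies `Y W = Y'` and
`S + Yᵀ A Y = (I - W F)ᵀ S (I - W F) + Fᵀ (M + Y'ᵀ A Y') F`,
which is positive definite since `F x = 0` forces `(I - W F) x = x`.
-/

open Matrix
open scoped Classical

/-- Applying `x ↦ x⁻¹` through the functional calculus (with `0⁻¹ = 0`) inverts `A` on its
range and kills its kernel. -/
lemma Matrix.IsSymm.exists_penrose_inverse {n : ℕ} {A : Matrix (Fin n) (Fin n) ℝ}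
    (hA : A.IsSymm) : ∃ B : Matrix (Fin n) (Fin n) ℝ,
      A * B * A = A ∧ B * A * B = B ∧ (A * B)ᵀ = A * B ∧ (B * A)ᵀ = B * A := by
  have hA' : IsSelfAdjoint A := by
    rwa [IsSelfAdjoint, star_eq_conjTranspose, conjTranspose_eq_transpose_of_trivial]
  have hmul (f g : ℝ → ℝ) : cfc f A * cfc g A = cfc (fun x => f x * g x) A :=
    (cfc_mul f g A (finite_real_spectrum.continuousOn f)
      (finite_real_spectrum.continuousOn g)).symm
  have hmul_left (f : ℝ → ℝ) : A * cfc f A = cfc (fun x => x * f x) A := by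
    simpa only [id, cfc_id ℝ A] using hmul id f
  have hmul_right (f : ℝ → ℝ) : cfc f A * A = cfc (fun x => f x * x) A := by
    simpa only [id, cfc_id ℝ A] using hmul f id
  have hsymm (f : ℝ → ℝ) : (cfc f A)ᵀ = cfc f A := by
    rw [← conjTranspose_eq_transpose_of_trivial, ← star_eq_conjTranspose]
    exact cfc_predicate f A
  refine ⟨cfc (fun x : ℝ => x⁻¹) A, ?_, ?_, ?_, ?_⟩
  · rw [hmul_left, hmul_right]
    simp only [mul_inv_mul_cancel, cfc_id' ℝ A]
  · rw [hmul_right, hmul]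
    congr! 2 with x
    simpa only [inv_inv] using mul_inv_mul_cancel x⁻¹
  · rw [hmul_left, hsymm]
  · rw [hmul_right, hsymm]

lemma pinv_penrose {n : ℕ} {A : Matrix (Fin n) (Fin n) ℝ} (hA : A.IsSymm) :
    A * pinv A * A = A ∧ pinv A * A * pinv A = pinv A ∧
      (A * pinv A)ᵀ = A * pinv A ∧ (pinv A * A)ᵀ = pinv A * A := by
  have h := hA.exists_penrose_inverse
  rw [pinv, dif_pos h]
  exact h.choose_spec

lemma Matrix.mul_eq_zero_of_ker_le {m n k : Type*} [Fintype n]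
    {A : Matrix n n ℝ} {L : Matrix m n ℝ} (hker : ∀ x, A *ᵥ x = 0 → L *ᵥ x = 0)
    {M : Matrix n k ℝ} (hM : A * M = 0) : L * M = 0 := by
  ext i j
  exact congrFun (hker (fun l => M l j) (funext fun l => congrFun (congrFun hM l) j)) i

lemma mul_pinv_mul_transpose_of_ker_le {m n : ℕ} {A : Matrix (Fin n) (Fin n) ℝ}
    {L : Matrix (Fin m) (Fin n) ℝ} (hA : A.IsSymm) (hker : ∀ x, A *ᵥ x = 0 → L *ᵥ x = 0) :
    A * (pinv A * Lᵀ) = Lᵀ := by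
  obtain ⟨hABA, -, hAB, -⟩ := pinv_penrose hA
  have hAB_symm : (1 - A * pinv A)ᵀ = 1 - A * pinv A := by
    rw [transpose_sub, transpose_one, hAB]
  have hA_proj : A * (1 - A * pinv A) = 0 := by
    nth_rw 1 [← hA]
    rw [← hAB_symm, ← transpose_mul, Matrix.sub_mul, Matrix.one_mul, hABA, sub_self,
      transpose_zero]
  have hL_proj := mul_eq_zero_of_ker_le hker hA_proj
  rw [Matrix.mul_sub, Matrix.mul_one, sub_eq_zero] at hL_proj
  rw [← Matrix.mul_assoc, ← hAB, ← transpose_mul, ← hL_proj]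

lemma Matrix.isSymm_iff_toBlocks {m n α : Type*} {P : Matrix (m ⊕ n) (m ⊕ n) α} :
    P.IsSymm ↔ P.toBlocks₁₁.IsSymm ∧ P.toBlocks₁₂ᵀ = P.toBlocks₂₁ ∧
      P.toBlocks₂₁ᵀ = P.toBlocks₁₂ ∧ P.toBlocks₂₂.IsSymm := by
  rw [← isSymm_fromBlocks_iff, fromBlocks_toBlocks]

lemma Matrix.IsSymm.transpose_mul_mul {m n : Type*} [Fintype m] {A : Matrix m m ℝ}
    (hA : A.IsSymm) (B : Matrix m n ℝ) : (Bᵀ * A * B).IsSymm := by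
  rw [IsSymm, transpose_mul, transpose_mul, hA.eq, transpose_transpose, Matrix.mul_assoc]

lemma Matrix.mulVec_injective_of_rank_eq_card {m n : Type*} [Fintype n]
    {W : Matrix m n ℝ} (hW : W.rank = Fintype.card n) : Function.Injective W.mulVec :=
  mulVec_injective_iff.mpr <| linearIndependent_iff_card_eq_finrank_span.mpr <|
    hW.symm.trans W.rank_eq_finrank_span_cols

lemma Matrix.dotProduct_transpose_mul_mul_mulVec {n k : Type*} [Fintype n] [Fintype k]
    (T : Matrix n n ℝ) (C : Matrix n k ℝ) (x : k → ℝ) :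
    x ⬝ᵥ ((Cᵀ * T * C) *ᵥ x) = (C *ᵥ x) ⬝ᵥ (T *ᵥ (C *ᵥ x)) := by
  simp only [← mulVec_mulVec, dotProduct_mulVec x, vecMul_transpose]

lemma Matrix.PosDef.transpose_mul_mul_add {m n k : Type*} [Fintype m] [Fintype n] [Fintype k]
    {S : Matrix m m ℝ} {E : Matrix n n ℝ} (hS : S.PosDef) (hE : E.PosDef)
    {G : Matrix m k ℝ} {F : Matrix n k ℝ} (hGF : ∀ x, G *ᵥ x = 0 → F *ᵥ x = 0 → x = 0) :
    (Gᵀ * S * G + Fᵀ * E * F).PosDef := by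
  refine of_dotProduct_mulVec_pos ((isHermitian_conjTranspose_mul_mul G hS.1).add
    (isHermitian_conjTranspose_mul_mul F hE.1)) fun x hx => ?_
  rw [star_trivial, add_mulVec, dotProduct_add, dotProduct_transpose_mul_mul_mulVec,
    dotProduct_transpose_mul_mul_mulVec]
  have hSG := hS.posSemidef.dotProduct_mulVec_nonneg (G *ᵥ x)
  have hEF := hE.posSemidef.dotProduct_mulVec_nonneg (F *ᵥ x)
  rw [star_trivial] at hSG hEF
  by_cases hFx : F *ᵥ x = 0
  · have hGx : G *ᵥ x ≠ 0 := fun hGx => hx (hGF x hGx hFx)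
    simpa using add_pos_of_pos_of_nonneg (hS.dotProduct_mulVec_pos hGx) hEF
  · simpa using add_pos_of_nonneg_of_pos hSG (hE.dotProduct_mulVec_pos hFx)

section ProjectionOfStrictQMI

variable {m n k : Type*} [Fintype m] [Fintype n] [Fintype k]
  {S : Matrix m m ℝ} {W : Matrix m n ℝ} (A : Matrix k k ℝ)

lemma posDef_of_posDef_add_transpose_mul_mul (hA : (-A).PosSemidef) {Y : Matrix k m ℝ}
    (hY : (S + Yᵀ * A * Y).PosDef) : S.PosDef := by
  have h := hY.add_posSemidef (hA.conjTranspose_mul_mul_same Y)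
  rwa [conjTranspose_eq_transpose_of_trivial, Matrix.mul_neg, Matrix.neg_mul,
    add_neg_cancel_right] at h

lemma posDef_transpose_mul_mul_add_of_posDef_add (hW : Function.Injective W.mulVec)
    {Y : Matrix k m ℝ} (hY : (S + Yᵀ * A * Y).PosDef) :
    (Wᵀ * S * W + (Y * W)ᵀ * A * (Y * W)).PosDef := by
  convert hY.conjTranspose_mul_mul_same hW using 2
  simp only [conjTranspose_eq_transpose_of_trivial, Matrix.mul_add, Matrix.add_mul, transpose_mul,
    Matrix.mul_assoc]

lemma exists_mul_eq_and_posDef_add [DecidableEq n] (hS : S.PosDef)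
    (hW : Function.Injective W.mulVec) {Y' : Matrix k n ℝ}
    (hY' : (Wᵀ * S * W + Y'ᵀ * A * Y').PosDef) :
    ∃ Y : Matrix k m ℝ, Y * W = Y' ∧ (S + Yᵀ * A * Y).PosDef := by
  set M := Wᵀ * S * W with hMdef
  have hM : M.PosDef := by
    simpa only [conjTranspose_eq_transpose_of_trivial] using hS.conjTranspose_mul_mul_same hW
  have hMsymm : Mᵀ = M := by simpa [conjTranspose_eq_transpose_of_trivial] using hM.1.eq
  have hSsymm : Sᵀ = S := by simpa [conjTranspose_eq_transpose_of_trivial] using hS.1.eq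
  have hdet : IsUnit M.det := (isUnit_iff_isUnit_det M).mp hM.isUnit
  set F := M⁻¹ * (Wᵀ * S)
  have hFW : F * W = 1 := by rw [Matrix.mul_assoc, nonsing_inv_mul M hdet]
  have hMF : M * F = Wᵀ * S := by rw [← Matrix.mul_assoc, mul_nonsing_inv M hdet, Matrix.one_mul]
  have hFM : Fᵀ * M = S * W := by
    simpa only [transpose_mul, hMsymm, hSsymm, transpose_transpose] using congrArg transpose hMF
  have hsplit : S + (Y' * F)ᵀ * A * (Y' * F) =
      (1 - W * F)ᵀ * S * (1 - W * F) + Fᵀ * (M + Y'ᵀ * A * Y') * F := by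
    simp only [transpose_mul, transpose_sub, transpose_one, Matrix.sub_mul, Matrix.mul_sub,
      Matrix.add_mul, Matrix.mul_add, Matrix.one_mul, Matrix.mul_one, Matrix.mul_assoc]
    have hSWF : S * (W * F) = Fᵀ * (M * F) := by
      rw [← Matrix.mul_assoc, ← hFM, Matrix.mul_assoc]
    have hFMF : Fᵀ * (Wᵀ * (S * (W * F))) = Fᵀ * (M * F) := by
      simp only [hMdef, Matrix.mul_assoc]
    rw [hFMF, hSWF, ← hMF]
    abel
  refine ⟨Y' * F, by rw [Matrix.mul_assoc, hFW, Matrix.mul_one], ?_⟩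
  rw [hsplit]
  refine hS.transpose_mul_mul_add hY' fun x hGx hFx => ?_
  simpa [sub_mulVec, ← mulVec_mulVec, hFx] using hGx

end ProjectionOfStrictQMI

lemma qmi_eq_toBlocks {q r : ℕ} (P : Matrix (Fin q ⊕ Fin r) (Fin q ⊕ Fin r) ℝ)
    (Z : Matrix (Fin r) (Fin q) ℝ) :
    qmi P Z = P.toBlocks₁₁ + P.toBlocks₁₂ * Z + Zᵀ * P.toBlocks₂₁ + Zᵀ * P.toBlocks₂₂ * Z := by
  refine (Matrix.mul_assoc (fromRows (1 : Matrix (Fin q) (Fin q) ℝ) Z)ᵀ P (fromRows 1 Z)).trans ?_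
  rw [← fromBlocks_toBlocks P, fromBlocks_mul_fromRows, transpose_fromRows, transpose_one,
    fromCols_mul_fromRows]
  simp only [Matrix.mul_one, Matrix.one_mul, Matrix.mul_add, Matrix.mul_assoc]
  abel

lemma qmi_eq_of_toBlocks₂₂_mul_eq {q r : ℕ} {P : Matrix (Fin q ⊕ Fin r) (Fin q ⊕ Fin r) ℝ}
    (hP : P.IsSymm) {K : Matrix (Fin r) (Fin q) ℝ} (hK : P.toBlocks₂₂ * K = P.toBlocks₂₁)
    (Z : Matrix (Fin r) (Fin q) ℝ) :
    qmi P Z = (P.toBlocks₁₁ - P.toBlocks₁₂ * K) + (Z + K)ᵀ * P.toBlocks₂₂ * (Z + K) := by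
  obtain ⟨-, h₁₂, -, h₂₂⟩ := isSymm_iff_toBlocks.mp hP
  have hKA : Kᵀ * P.toBlocks₂₂ = P.toBlocks₁₂ := by
    rw [← h₂₂, ← transpose_mul, hK, ← h₁₂, transpose_transpose]
  rw [qmi_eq_toBlocks, transpose_add, Matrix.add_mul, Matrix.add_mul, Matrix.mul_add,
    Matrix.mul_add, hKA, Matrix.mul_assoc Zᵀ P.toBlocks₂₂ K, hK]
  abel

lemma qmi_fromBlocks_transpose_mul_mul_eq {q r p : ℕ}
    {P : Matrix (Fin q ⊕ Fin r) (Fin q ⊕ Fin r) ℝ} (hP : P.IsSymm)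
    {K : Matrix (Fin r) (Fin q) ℝ} (hK : P.toBlocks₂₂ * K = P.toBlocks₂₁)
    (W : Matrix (Fin q) (Fin p) ℝ) (Z : Matrix (Fin r) (Fin p) ℝ) :
    qmi (fromBlocks (Wᵀ * P.toBlocks₁₁ * W) (Wᵀ * P.toBlocks₁₂) (P.toBlocks₂₁ * W)
        P.toBlocks₂₂) Z =
      Wᵀ * (P.toBlocks₁₁ - P.toBlocks₁₂ * K) * W + (Z + K * W)ᵀ * P.toBlocks₂₂ * (Z + K * W) := by
  obtain ⟨h₁₁, h₁₂, -, h₂₂⟩ := isSymm_iff_toBlocks.mp hP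
  have hPW : (fromBlocks (Wᵀ * P.toBlocks₁₁ * W) (Wᵀ * P.toBlocks₁₂) (P.toBlocks₂₁ * W)
      P.toBlocks₂₂).IsSymm :=
    (h₁₁.transpose_mul_mul W).fromBlocks (by rw [transpose_mul, transpose_transpose, h₁₂]) h₂₂
  rw [qmi_eq_of_toBlocks₂₂_mul_eq hPW (K := K * W) (by simp [← Matrix.mul_assoc, hK]),
    toBlocks_fromBlocks₁₁, toBlocks_fromBlocks₁₂, toBlocks_fromBlocks₂₂, Matrix.mul_sub,
    Matrix.sub_mul]
  simp only [Matrix.mul_assoc]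

lemma memPi.toBlocks₂₂_mul_pinv_mul {q r : ℕ} {P : Matrix (Fin q ⊕ Fin r) (Fin q ⊕ Fin r) ℝ}
    (hP : memPi P) : P.toBlocks₂₂ * (pinv P.toBlocks₂₂ * P.toBlocks₁₂ᵀ) = P.toBlocks₂₁ := by
  obtain ⟨-, h₁₂, -, h₂₂⟩ := isSymm_iff_toBlocks.mp hP.1
  exact h₁₂ ▸ mul_pinv_mul_transpose_of_ker_le h₂₂ hP.2.2.2

/-- Strict projection result. For `Π ∈ Π_{q,r}` and `W ∈ ℝ^{q×p}` of
full column rank, if `Z_r⁺(Π)` is nonempty, then `Z_r⁺(Π)·W = Z_r⁺(Π_W)`. -/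
theorem stmt_8 {q r p : ℕ} (P : Matrix (Fin q ⊕ Fin r) (Fin q ⊕ Fin r) ℝ)
    (W : Matrix (Fin q) (Fin p) ℝ) (hP : memPi P) (hW : W.rank = p)
    (hne : (ZrPlusSet P).Nonempty) :
    (fun Z => Z * W) '' ZrPlusSet P =
      ZrPlusSet (fromBlocks (Wᵀ * P.toBlocks₁₁ * W) (Wᵀ * P.toBlocks₁₂)
        (P.toBlocks₂₁ * W) P.toBlocks₂₂) := by
  have hK := hP.toBlocks₂₂_mul_pinv_mul
  set K := pinv P.toBlocks₂₂ * P.toBlocks₁₂ᵀ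
  have hqmi := qmi_eq_of_toBlocks₂₂_mul_eq hP.1 hK
  have hqmiW := qmi_fromBlocks_transpose_mul_mul_eq hP.1 hK W
  have hS : (P.toBlocks₁₁ - P.toBlocks₁₂ * K).PosDef := by
    obtain ⟨Z₀, hZ₀⟩ := hne
    exact posDef_of_posDef_add_transpose_mul_mul _ hP.2.1 (by rw [← hqmi]; exact hZ₀)
  have hWinj := mulVec_injective_of_rank_eq_card (hW.trans (Fintype.card_fin p).symm)
  ext Z'
  constructor
  · rintro ⟨Z, hZ, rfl⟩
    change (qmi _ (Z * W)).PosDef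
    rw [hqmiW, ← Matrix.add_mul]
    exact posDef_transpose_mul_mul_add_of_posDef_add _ hWinj (hqmi Z ▸ hZ)
  · intro hZ'
    obtain ⟨Y, hYW, hY⟩ := exists_mul_eq_and_posDef_add _ hS hWinj (by rw [← hqmiW]; exact hZ')
    refine ⟨Y - K, ?_, show (Y - K) * W = Z' by rw [Matrix.sub_mul, hYW, add_sub_cancel_right]⟩
    change (qmi P (Y - K)).PosDef
    rwa [hqmi, sub_add_cancel]
end

section
/- Let M, N ∈ S^{q+r} with N ∈ Π_{q,r}, and assume N has at least one positive eigenvalue. Then the following are equivalent: (i) Z_r(N) ⊆ Z_r(M); (ii) xᵀ M x ≥ 0 for all x ∈ ℝ^{q+r} satisfying xᵀ N x ≥ 0. -/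
/-!
For `N ∈ Π_{q,r}` put `K = N₂₂^† N₂₁`. The kernel condition gives `N₂₂ K = N₂₁`, hence the
decomposition `xᵀNx = uᵀ(N|N₂₂)u + (w + Ku)ᵀ N₂₂ (w + Ku)` for `x = (u, w)`.

If `xᵀNx ≥ 0` and `u ≠ 0`, set `y = w + Ku` and pick `a` with `aᵀu = 1`; then `Z = y aᵀ - K` maps
`u` to `w` and `[v; Zv]ᵀ N [v; Zv] = vᵀ(N|N₂₂)v + (aᵀv)² yᵀN₂₂y`. This is nonnegative for
`a = (N|N₂₂)u / uᵀ(N|N₂₂)u` by Cauchy–Schwarz, since `yᵀN₂₂y ≥ -uᵀ(N|N₂₂)u`; if that denominator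
vanishes then `yᵀN₂₂y = 0` and any `a` works. So `Z ∈ Z_r(N) ⊆ Z_r(M)` and
`xᵀMx = uᵀ[I; Z]ᵀM[I; Z]u ≥ 0`. A positive eigenvalue of `N` forces `q > 0`, so points with
`u = 0` are limits of such points, and `{x | xᵀMx ≥ 0}` is closed. The other implication is
immediate from `vᵀ[I; Z]ᵀΠ[I; Z]v = [v; Zv]ᵀ Π [v; Zv]`.
-/

open Matrix
open scoped Classical

lemma exists_penrose_of_isSymm {n : Type*} [Fintype n] {A : Matrix n n ℝ}
    (hA : A.IsSymm) : ∃ B : Matrix n n ℝ,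
      A * B * A = A ∧ B * A * B = B ∧ (A * B)ᵀ = A * B ∧ (B * A)ᵀ = B * A := by
  have hsa : IsSelfAdjoint A := by
    rw [IsSelfAdjoint, star_eq_conjTranspose, conjTranspose_eq_transpose_of_trivial]; exact hA
  have hcont (f : ℝ → ℝ) : ContinuousOn f (spectrum ℝ A) := A.finite_spectrum.continuousOn _
  have hmul (f g : ℝ → ℝ) : cfc f A * cfc g A = cfc (fun x => f x * g x) A :=
    (cfc_mul f g A (hcont f) (hcont g)).symm
  have hsymm (f : ℝ → ℝ) : (cfc f A)ᵀ = cfc f A := by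
    rw [← conjTranspose_eq_transpose_of_trivial, ← star_eq_conjTranspose]
    exact (cfc_predicate f A).star_eq
  rw [← cfc_id' ℝ A]
  refine ⟨cfc (fun x : ℝ => x⁻¹) A, ?_, ?_, ?_, ?_⟩ <;> simp only [hmul, hsymm]
  · simp only [mul_inv_mul_cancel]
  · simpa using congrArg (cfc · A) (funext fun x : ℝ => mul_inv_mul_cancel x⁻¹)

lemma mul_pinv_mul_self {n : ℕ} {A : Matrix (Fin n) (Fin n) ℝ} (hA : A.IsSymm) :
    A * pinv A * A = A := by
  have h := exists_penrose_of_isSymm hA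
  rw [pinv, dif_pos h]
  exact h.choose_spec.1

namespace Matrix

variable {ι : Type*} [Fintype ι] {S : Matrix ι ι ℝ}

lemma PosSemidef.dotProduct_mulVec_sq_le (hS : S.PosSemidef) (u v : ι → ℝ) :
    (v ⬝ᵥ (S *ᵥ u)) ^ 2 ≤ (v ⬝ᵥ (S *ᵥ v)) * (u ⬝ᵥ (S *ᵥ u)) := by
  have hsymm : u ⬝ᵥ (S *ᵥ v) = v ⬝ᵥ (S *ᵥ u) := by
    rw [← dotProduct_transpose_mulVec, ← conjTranspose_eq_transpose_of_trivial, hS.1.eq]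
  have hquad (t : ℝ) : 0 ≤ (u ⬝ᵥ (S *ᵥ u)) * (t * t) + 2 * (v ⬝ᵥ (S *ᵥ u)) * t
      + v ⬝ᵥ (S *ᵥ v) := by
    have h := hS.dotProduct_mulVec_nonneg (v + t • u)
    simp only [star_trivial, mulVec_add, mulVec_smul, dotProduct_add, add_dotProduct,
      dotProduct_smul, smul_dotProduct, hsymm, smul_eq_mul] at h
    linarith
  have := discrim_le_zero hquad
  rw [discrim] at this
  linarith

lemma exists_dotProduct_eq_one_forall_nonneg (hS : S.PosSemidef) {u : ι → ℝ} (hu : u ≠ 0)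
    {c : ℝ} (hc : c ≤ 0) (hsc : 0 ≤ u ⬝ᵥ (S *ᵥ u) + c) :
    ∃ a : ι → ℝ, a ⬝ᵥ u = 1 ∧ ∀ v, 0 ≤ v ⬝ᵥ (S *ᵥ v) + (a ⬝ᵥ v) ^ 2 * c := by
  have hSnonneg (v : ι → ℝ) : 0 ≤ v ⬝ᵥ (S *ᵥ v) := by
    simpa using hS.dotProduct_mulVec_nonneg v
  rcases (hSnonneg u).eq_or_lt with hs | hs
  · have hc0 : c = 0 := by linarith
    have huu : u ⬝ᵥ u ≠ 0 := by simpa using hu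
    refine ⟨(u ⬝ᵥ u)⁻¹ • u, by rw [smul_dotProduct, smul_eq_mul, inv_mul_cancel₀ huu], ?_⟩
    simpa [hc0] using hSnonneg
  · set s := u ⬝ᵥ (S *ᵥ u)
    refine ⟨s⁻¹ • (S *ᵥ u), ?_, fun v => ?_⟩
    · rw [smul_dotProduct, dotProduct_comm, smul_eq_mul, inv_mul_cancel₀ hs.ne']
    · -- `c ≥ -s` and Cauchy–Schwarz `(vᵀSu)² ≤ (vᵀSv) s`
      rw [smul_dotProduct, dotProduct_comm (S *ᵥ u), smul_eq_mul]
      set D := v ⬝ᵥ (S *ᵥ u)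
      have hc' : (s⁻¹ * D) ^ 2 * (-s) ≤ (s⁻¹ * D) ^ 2 * c :=
        mul_le_mul_of_nonneg_left (by linarith) (sq_nonneg _)
      have hD : (s⁻¹ * D) ^ 2 * s ≤ v ⬝ᵥ (S *ᵥ v) := by
        rw [show (s⁻¹ * D) ^ 2 * s = D ^ 2 / s by field_simp, div_le_iff₀ hs]
        exact hS.dotProduct_mulVec_sq_le u v
      linarith

end Matrix

section Blocks

variable {q r : ℕ}

-- In `qmi` the row type of the second `1` is undetermined at elaboration time, so its products
-- fell back to the `CStarMatrix` default instance; this restates it with `Matrix` products.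
lemma qmi_eq_mul (P : Matrix (Fin q ⊕ Fin r) (Fin q ⊕ Fin r) ℝ) (Z : Matrix (Fin r) (Fin q) ℝ) :
    qmi P Z = (fromRows (1 : Matrix (Fin q) (Fin q) ℝ) Z)ᵀ * P *
      fromRows (1 : Matrix (Fin q) (Fin q) ℝ) Z :=
  rfl

lemma dotProduct_qmi_mulVec (P : Matrix (Fin q ⊕ Fin r) (Fin q ⊕ Fin r) ℝ)
    (Z : Matrix (Fin r) (Fin q) ℝ) (v : Fin q → ℝ) :
    v ⬝ᵥ (qmi P Z *ᵥ v) = Sum.elim v (Z *ᵥ v) ⬝ᵥ (P *ᵥ Sum.elim v (Z *ᵥ v)) := by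
  rw [qmi_eq_mul, ← mulVec_mulVec, ← mulVec_mulVec, dotProduct_mulVec, vecMul_transpose,
    fromRows_mulVec, one_mulVec]

lemma ZrSet.quadForm_nonneg {P : Matrix (Fin q ⊕ Fin r) (Fin q ⊕ Fin r) ℝ}
    {Z : Matrix (Fin r) (Fin q) ℝ} (hZ : Z ∈ ZrSet P) (v : Fin q → ℝ) :
    0 ≤ Sum.elim v (Z *ᵥ v) ⬝ᵥ (P *ᵥ Sum.elim v (Z *ᵥ v)) := by
  simpa [dotProduct_qmi_mulVec] using hZ.dotProduct_mulVec_nonneg v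

lemma mem_ZrSet_of_quadForm_nonneg {P : Matrix (Fin q ⊕ Fin r) (Fin q ⊕ Fin r) ℝ}
    (hP : P.IsSymm) {Z : Matrix (Fin r) (Fin q) ℝ}
    (h : ∀ v, 0 ≤ Sum.elim v (Z *ᵥ v) ⬝ᵥ (P *ᵥ Sum.elim v (Z *ᵥ v))) : Z ∈ ZrSet P := by
  have hsymm : (qmi P Z).IsHermitian := by
    rw [IsHermitian, conjTranspose_eq_transpose_of_trivial, qmi_eq_mul, transpose_mul,
      transpose_mul, transpose_transpose, hP.eq, Matrix.mul_assoc]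
  exact .of_dotProduct_mulVec_nonneg hsymm fun v => by simpa [dotProduct_qmi_mulVec] using h v

lemma ZrSet_subset_of_quadForm_nonneg {M N : Matrix (Fin q ⊕ Fin r) (Fin q ⊕ Fin r) ℝ}
    (hM : M.IsSymm) (h : ∀ x, 0 ≤ x ⬝ᵥ (N *ᵥ x) → 0 ≤ x ⬝ᵥ (M *ᵥ x)) :
    ZrSet N ⊆ ZrSet M :=
  fun _ hZ => mem_ZrSet_of_quadForm_nonneg hM fun v => h _ (ZrSet.quadForm_nonneg hZ v)

noncomputable def schurK (P : Matrix (Fin q ⊕ Fin r) (Fin q ⊕ Fin r) ℝ) :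
    Matrix (Fin r) (Fin q) ℝ :=
  pinv P.toBlocks₂₂ * P.toBlocks₂₁

variable {N : Matrix (Fin q ⊕ Fin r) (Fin q ⊕ Fin r) ℝ}

lemma toBlocks₂₂_mul_schurK (hN : N.IsSymm)
    (hker : ∀ x, N.toBlocks₂₂ *ᵥ x = 0 → N.toBlocks₁₂ *ᵥ x = 0) :
    N.toBlocks₂₂ * schurK N = N.toBlocks₂₁ := by
  obtain ⟨-, h12, -, h22⟩ := isSymm_fromBlocks_iff.1 (N.fromBlocks_toBlocks.symm ▸ hN)
  set A := N.toBlocks₂₂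
  -- `1 - (pinv A)ᵀ * A` maps into `ker A ⊆ ker N₁₂`
  have hA : A * (1 - (pinv A)ᵀ * A) = 0 := by
    rw [Matrix.mul_sub, Matrix.mul_one, ← Matrix.mul_assoc, sub_eq_zero]
    simpa [transpose_mul, h22.eq, Matrix.mul_assoc] using
      (congrArg transpose (mul_pinv_mul_self h22)).symm
  have h12A : N.toBlocks₁₂ * (1 - (pinv A)ᵀ * A) = 0 := by
    refine ext_iff_mulVec.2 fun v => ?_
    rw [← mulVec_mulVec, hker _ (by rw [mulVec_mulVec, hA, zero_mulVec]), zero_mulVec]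
  rw [Matrix.mul_sub, Matrix.mul_one, sub_eq_zero] at h12A
  simpa [schurK, transpose_mul, h12, h22.eq, Matrix.mul_assoc] using (congrArg transpose h12A).symm

lemma quadForm_sumElim_eq_schurC (hN : N.IsSymm)
    (hker : ∀ x, N.toBlocks₂₂ *ᵥ x = 0 → N.toBlocks₁₂ *ᵥ x = 0) (u : Fin q → ℝ) (w : Fin r → ℝ) :
    Sum.elim u w ⬝ᵥ (N *ᵥ Sum.elim u w) =
      u ⬝ᵥ (schurC N *ᵥ u) + (w + schurK N *ᵥ u) ⬝ᵥ (N.toBlocks₂₂ *ᵥ (w + schurK N *ᵥ u)) := by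
  obtain ⟨-, h12, h21, h22⟩ := isSymm_fromBlocks_iff.1 (N.fromBlocks_toBlocks.symm ▸ hN)
  have hK := toBlocks₂₂_mul_schurK hN hker
  set K := schurK N
  have hKu : N.toBlocks₂₂ *ᵥ (K *ᵥ u) = N.toBlocks₂₁ *ᵥ u := by rw [mulVec_mulVec, hK]
  have hS : schurC N *ᵥ u = N.toBlocks₁₁ *ᵥ u - N.toBlocks₁₂ *ᵥ (K *ᵥ u) := by
    rw [schurC, sub_mulVec, Matrix.mul_assoc, ← mulVec_mulVec]; rfl
  have h1 : u ⬝ᵥ (N.toBlocks₁₂ *ᵥ w) = w ⬝ᵥ (N.toBlocks₂₁ *ᵥ u) := by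
    rw [← dotProduct_transpose_mulVec, h12]
  have h2 : (K *ᵥ u) ⬝ᵥ (N.toBlocks₂₂ *ᵥ w) = w ⬝ᵥ (N.toBlocks₂₁ *ᵥ u) := by
    rw [← dotProduct_transpose_mulVec, h22.eq, hKu]
  have h3 : (K *ᵥ u) ⬝ᵥ (N.toBlocks₂₁ *ᵥ u) = u ⬝ᵥ (N.toBlocks₁₂ *ᵥ (K *ᵥ u)) := by
    rw [← dotProduct_transpose_mulVec, h21]
  conv_lhs => rw [← N.fromBlocks_toBlocks, fromBlocks_mulVec]
  simp only [Sum.elim_comp_inl, Sum.elim_comp_inr, sumElim_dotProduct_sumElim, hS, mulVec_add,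
    hKu, dotProduct_add, add_dotProduct, dotProduct_sub]
  linarith

end Blocks

lemma exists_quadForm_pos_of_hasEigenvalue {ι : Type*} [Fintype ι]
    {A : Matrix ι ι ℝ} {μ : ℝ} (hμ : 0 < μ) (h : Module.End.HasEigenvalue (mulVecLin A) μ) :
    ∃ x, 0 < x ⬝ᵥ (A *ᵥ x) := by
  obtain ⟨v, hv⟩ := h.exists_hasEigenvector
  refine ⟨v, ?_⟩
  rw [show A *ᵥ v = μ • v from hv.apply_eq_smul, dotProduct_smul, smul_eq_mul]
  exact mul_pos hμ (by simpa using dotProduct_star_self_pos_iff.2 hv.2)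

namespace memPi

variable {q r : ℕ} {N : Matrix (Fin q ⊕ Fin r) (Fin q ⊕ Fin r) ℝ}

lemma quadForm_toBlocks₂₂_nonpos (hN : memPi N) (y : Fin r → ℝ) :
    y ⬝ᵥ (N.toBlocks₂₂ *ᵥ y) ≤ 0 := by
  simpa [neg_mulVec] using hN.2.1.dotProduct_mulVec_nonneg y

lemma quadForm_sumElim_zero (hN : memPi N) (w : Fin r → ℝ) :
    Sum.elim 0 w ⬝ᵥ (N *ᵥ Sum.elim 0 w) = w ⬝ᵥ (N.toBlocks₂₂ *ᵥ w) := by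
  simp [quadForm_sumElim_eq_schurC hN.1 hN.2.2.2]

lemma inl_ne_zero_of_quadForm_pos (hN : memPi N) {x : Fin q ⊕ Fin r → ℝ}
    (hx : 0 < x ⬝ᵥ (N *ᵥ x)) : x ∘ Sum.inl ≠ 0 := by
  intro hu
  rw [← Sum.elim_comp_inl_inr x, hu, hN.quadForm_sumElim_zero] at hx
  linarith [hN.quadForm_toBlocks₂₂_nonpos (x ∘ Sum.inr)]

lemma exists_mem_ZrSet_mulVec_eq (hN : memPi N) {u : Fin q → ℝ} (hu : u ≠ 0) {w : Fin r → ℝ}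
    (hx : 0 ≤ Sum.elim u w ⬝ᵥ (N *ᵥ Sum.elim u w)) : ∃ Z ∈ ZrSet N, Z *ᵥ u = w := by
  have hdec := quadForm_sumElim_eq_schurC hN.1 hN.2.2.2
  set K := schurK N
  set y := w + K *ᵥ u
  obtain ⟨a, hau, ha⟩ := exists_dotProduct_eq_one_forall_nonneg hN.2.2.1 hu
    (hN.quadForm_toBlocks₂₂_nonpos y) (hdec u w ▸ hx)
  refine ⟨vecMulVec y a - K, mem_ZrSet_of_quadForm_nonneg hN.1 fun v => ?_, ?_⟩
  · have hZv : (vecMulVec y a - K) *ᵥ v + K *ᵥ v = (a ⬝ᵥ v) • y := by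
      simp [sub_mulVec, vecMulVec_mulVec]
    rw [hdec, hZv, mulVec_smul, dotProduct_smul, smul_dotProduct]
    simpa [sq, mul_assoc] using ha v
  · simp [sub_mulVec, vecMulVec_mulVec, hau, y]

lemma mem_closure_quadForm_nonneg_inl_ne_zero (hN : memPi N) {e : Fin q → ℝ} (he : e ≠ 0)
    {x : Fin q ⊕ Fin r → ℝ} (hx : 0 ≤ x ⬝ᵥ (N *ᵥ x)) :
    x ∈ closure {x | 0 ≤ x ⬝ᵥ (N *ᵥ x) ∧ x ∘ Sum.inl ≠ 0} := by
  obtain hu | hu := ne_or_eq (x ∘ Sum.inl) 0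
  · exact subset_closure ⟨hx, hu⟩
  set w := x ∘ Sum.inr
  rw [← Sum.elim_comp_inl_inr x, hu, hN.quadForm_sumElim_zero] at hx
  -- moving along `ε ↦ (ε e, w - K (ε e))` keeps `w + K u = w` fixed
  let path : ℝ → Fin q ⊕ Fin r → ℝ := fun ε => Sum.elim (ε • e) (w - schurK N *ᵥ (ε • e))
  have hpath : Continuous path := by
    refine continuous_pi fun i => ?_
    cases i <;> simp only [path, Sum.elim_inl, Sum.elim_inr] <;> fun_prop
  have hpath0 : path 0 = x := by
    funext i
    cases i with
    | inl i => simpa [path] using (congrFun hu i).symm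
    | inr i => simp [path, w]
  refine mem_closure_of_tendsto (hpath0 ▸ (hpath.tendsto 0).mono_left nhdsWithin_le_nhds)
    (eventually_nhdsWithin_of_forall (s := {0}ᶜ) fun ε hε => ⟨?_, ?_⟩)
  · rw [quadForm_sumElim_eq_schurC hN.1 hN.2.2.2, sub_add_cancel]
    have := hN.2.2.1.dotProduct_mulVec_nonneg (ε • e)
    simp only [star_trivial] at this
    linarith
  · simpa [path] using smul_ne_zero hε he

end memPi

/-- For symmetric `M` and `N ∈ Π_{q,r}` with at least one positive
eigenvalue, `Z_r(N) ⊆ Z_r(M)` iff `xᵀNx ≥ 0 ⟹ xᵀMx ≥ 0` for all `x`. -/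
theorem stmt_11 {q r : ℕ} (M N : Matrix (Fin q ⊕ Fin r) (Fin q ⊕ Fin r) ℝ)
    (hM : M.IsSymm) (hN : memPi N)
    (hpos : ∃ μ : ℝ, 0 < μ ∧ Module.End.HasEigenvalue (Matrix.mulVecLin N) μ) :
    ZrSet N ⊆ ZrSet M ↔
      ∀ x : Fin q ⊕ Fin r → ℝ, 0 ≤ x ⬝ᵥ (N *ᵥ x) → 0 ≤ x ⬝ᵥ (M *ᵥ x) := by
  refine ⟨fun hsub x hx => ?_, ZrSet_subset_of_quadForm_nonneg hM⟩
  obtain ⟨μ, hμ, hev⟩ := hpos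
  obtain ⟨y, hy⟩ := exists_quadForm_pos_of_hasEigenvalue hμ hev
  have hclosed : IsClosed {x : Fin q ⊕ Fin r → ℝ | 0 ≤ x ⬝ᵥ (M *ᵥ x)} :=
    isClosed_le continuous_const (by fun_prop)
  refine hclosed.closure_subset_iff.2 ?_
    (hN.mem_closure_quadForm_nonneg_inl_ne_zero (hN.inl_ne_zero_of_quadForm_pos hy) hx)
  rintro z ⟨hzN, hz⟩
  obtain ⟨Z, hZ, hZz⟩ := hN.exists_mem_ZrSet_mulVec_eq hz (w := z ∘ Sum.inr)
    (by rwa [Sum.elim_comp_inl_inr])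
  simpa [hZz] using ZrSet.quadForm_nonneg (hsub hZ) (z ∘ Sum.inl)
end
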